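/- For every real c ≥ 1 and all p, q ∈ ℝ³ with p ≠ q, the function Λ^c satisfies the two-sided bound (1/125)·⟨p⟩^{−3}⟨q⟩^{−3}·max{p⁰/(c⟨q⟩⁶), q⁰/(c⟨p⟩⁶)} ≤ c²·Λ^c(p,q)/(p⁰q⁰) ≤ 32·|p−q|^{−3}·min{(q⁰/c)⟨p⟩⁴, (p⁰/c)⟨q⟩⁴}. -/

import Mathlib

open Real MeasureTheory
open scoped BigOperators

noncomputable section
set_option maxHeartbeats 1000000

private lemma le_of_sq {x y : ℝ} (hx : 0 ≤ x) (hy : 0 ≤ y) (h : x^2 ≤ y^2) : x ≤ y := by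
  nlinarith [sq_nonneg (x - y), sq_nonneg (x + y)]

private lemma key_core (c a b d ip P Q Jp Jq τ s : ℝ)
    (hc : 1 ≤ c) (ha : 0 ≤ a) (hb : 0 ≤ b) (hd0 : 0 < d)
    (hP2 : P ^ 2 = c ^ 2 + a ^ 2) (hQ2 : Q ^ 2 = c ^ 2 + b ^ 2)
    (hJp2 : Jp ^ 2 = 1 + a ^ 2) (hJq2 : Jq ^ 2 = 1 + b ^ 2)
    (hd2 : d ^ 2 = a ^ 2 - 2 * ip + b ^ 2)
    (hip1 : ip ≤ a * b) (hip2 : -(a * b) ≤ ip)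
    (hP0 : 0 < P) (hQ0 : 0 < Q) (hJp0 : 0 < Jp) (hJq0 : 0 < Jq)
    (htau : τ = P * Q - ip) (hs0 : 0 < s)
    (hcs2 : c ^ 2 * s ^ 2 = τ ^ 2 - c ^ 4) :
    P / (125 * c * Jp ^ 3 * Jq ^ 9) ≤ τ ^ 2 / (c ^ 2 * s ^ 3 * (P * Q)) ∧
      τ ^ 2 / (c ^ 2 * s ^ 3 * (P * Q)) ≤ 32 / d ^ 3 * (Q / c * Jp ^ 4) := by
  have hc0 : (0:ℝ) < c := lt_of_lt_of_le one_pos hc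
  have hab0 : 0 ≤ a * b := mul_nonneg ha hb
  have hPQ0 : 0 < P * Q := mul_pos hP0 hQ0
  have hPQ2 : (P * Q) ^ 2 = (c ^ 2 + a ^ 2) * (c ^ 2 + b ^ 2) := by rw [mul_pow, hP2, hQ2]
  have hPQab : c ^ 2 + a * b ≤ P * Q := by
    refine le_of_sq (by positivity) hPQ0.le ?_
    linarith [hPQ2, mul_nonneg (sq_nonneg c) (sq_nonneg (a - b))]
  have hτc2 : c ^ 2 ≤ τ := by linarith
  have hτ0 : 0 < τ := lt_of_lt_of_le (by positivity) hτc2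
  have hτub : τ ≤ 2 * (P * Q) := by linarith [sq_nonneg c]
  have htb2PQ : P * Q + c ^ 2 + ip ≤ 2 * (P * Q) := by linarith
  have h_iden : (τ - c ^ 2) * (P * Q + c ^ 2 + ip)
      = c ^ 2 * d ^ 2 + (a ^ 2 * b ^ 2 - ip ^ 2) := by
    linear_combination (P * Q + c ^ 2 + ip) * htau + hPQ2 - c ^ 2 * hd2
  have hip3 : 0 ≤ a ^ 2 * b ^ 2 - ip ^ 2 := by
    linarith [mul_nonneg (by linarith : (0:ℝ) ≤ a * b - ip) (by linarith : (0:ℝ) ≤ a * b + ip)]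
  have hA0 : 0 ≤ c ^ 2 * d ^ 2 + (a ^ 2 * b ^ 2 - ip ^ 2) := by
    linarith [mul_nonneg (sq_nonneg c) (sq_nonneg d)]
  have hcP : c ≤ P := le_of_sq hc0.le hP0.le (by linarith [hP2, sq_nonneg a])
  have hcQ : c ≤ Q := le_of_sq hc0.le hQ0.le (by linarith [hQ2, sq_nonneg b])
  have hJp1 : 1 ≤ Jp := le_of_sq (by norm_num) hJp0.le (by linarith [hJp2, sq_nonneg a])
  have hJq1 : 1 ≤ Jq := le_of_sq (by norm_num) hJq0.le (by linarith [hJq2, sq_nonneg b])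
  have hc21 : (0:ℝ) ≤ c ^ 2 - 1 := by nlinarith [hc, hc0]
  have hc2Jp2 : c ^ 2 * Jp ^ 2 = c ^ 2 * (1 + a ^ 2) := by rw [hJp2]
  have hc2Jq2 : c ^ 2 * Jq ^ 2 = c ^ 2 * (1 + b ^ 2) := by rw [hJq2]
  have hP2c : P ^ 2 ≤ c ^ 2 * Jp ^ 2 := by
    linarith [hP2, hc2Jp2, mul_nonneg hc21 (sq_nonneg a)]
  have hQ2c : Q ^ 2 ≤ c ^ 2 * Jq ^ 2 := by
    linarith [hQ2, hc2Jq2, mul_nonneg hc21 (sq_nonneg b)]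
  have hJJ : Jp ^ 2 * Jq ^ 2 = (1 + a ^ 2) * (1 + b ^ 2) := by rw [hJp2, hJq2]
  have hc2d2 : c ^ 2 * d ^ 2 = c ^ 2 * (a ^ 2 - 2 * ip + b ^ 2) := by rw [hd2]
  have hd_le : d ^ 2 ≤ Jp ^ 2 * Jq ^ 2 := by
    linarith [hd2, hip2, hJJ, sq_nonneg (a * b - 1)]
  -- lower bound for s² : d² τ ≤ 2 P Q s²
  have h7 : c ^ 2 * d ^ 2 ≤ (τ - c ^ 2) * (2 * (P * Q)) := by
    calc c ^ 2 * d ^ 2 ≤ c ^ 2 * d ^ 2 + (a ^ 2 * b ^ 2 - ip ^ 2) := by linarith [hip3]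
      _ = (τ - c ^ 2) * (P * Q + c ^ 2 + ip) := h_iden.symm
      _ ≤ (τ - c ^ 2) * (2 * (P * Q)) :=
          mul_le_mul_of_nonneg_left htb2PQ (by linarith)
  have hs2lb : d ^ 2 * τ ≤ 2 * (P * Q) * s ^ 2 := by
    have h9 : 2 * (P * Q) * (c ^ 2 * s ^ 2) = 2 * (P * Q) * (τ ^ 2 - c ^ 4) := by rw [hcs2]
    have h8 : c ^ 2 * (d ^ 2 * τ) ≤ c ^ 2 * (2 * (P * Q) * s ^ 2) := by
      linarith [mul_le_mul_of_nonneg_right h7 hτ0.le, h9,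
        mul_nonneg (mul_nonneg (by norm_num : (0:ℝ) ≤ 2) hPQ0.le)
          (mul_nonneg (sq_nonneg c) (by linarith : (0:ℝ) ≤ τ - c ^ 2))]
    exact le_of_mul_le_mul_left h8 (pow_pos hc0 2)
  -- upper bound for s² : 3 c² (P+Q)² (c² s²) ≤ 16 τ A (P Q)
  have h10 : c ^ 2 * (c ^ 2 + a ^ 2 + b ^ 2) ≤ 2 * (P * Q) * (P * Q - a * b) := by
    linarith [hPQ2, sq_nonneg (P * Q - a * b)]
  have hc2P2 : c ^ 2 * P ^ 2 = c ^ 2 * (c ^ 2 + a ^ 2) := by rw [hP2]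
  have hc2Q2 : c ^ 2 * Q ^ 2 = c ^ 2 * (c ^ 2 + b ^ 2) := by rw [hQ2]
  have hT_tau : c ^ 2 * (P + Q) ^ 2 ≤ 8 * (P * Q) * τ := by
    linarith [h10, hc2P2, hc2Q2,
      mul_le_mul_of_nonneg_left (show P * Q - a * b ≤ τ by linarith)
        (by positivity : (0:ℝ) ≤ 2 * (P * Q)),
      mul_nonneg (sq_nonneg c) (sq_nonneg (P - Q)),
      mul_nonneg (sq_nonneg c) (sq_nonneg a), mul_nonneg (sq_nonneg c) (sq_nonneg b)]
  have hT_tb : 3 * (c ^ 2 * (P + Q) ^ 2) ≤ 8 * (P * Q) * (P * Q + c ^ 2 + ip) := by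
    linarith [h10, hc2P2, hc2Q2,
      mul_le_mul_of_nonneg_left (show P * Q + c ^ 2 - a * b ≤ P * Q + c ^ 2 + ip by linarith)
        (by positivity : (0:ℝ) ≤ 8 * (P * Q)),
      mul_nonneg (sq_nonneg c) (sq_nonneg (P - Q)),
      mul_nonneg (sq_nonneg c) (by linarith : (0:ℝ) ≤ P * Q - c ^ 2),
      mul_nonneg (sq_nonneg c) (sq_nonneg a), mul_nonneg (sq_nonneg c) (sq_nonneg b)]
  have h15 : (τ ^ 2 - c ^ 4) * (P * Q + c ^ 2 + ip)
      = (τ + c ^ 2) * (c ^ 2 * d ^ 2 + (a ^ 2 * b ^ 2 - ip ^ 2)) := by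
    linear_combination (τ + c ^ 2) * h_iden
  have hs2ub : 3 * c ^ 2 * (P + Q) ^ 2 * (c ^ 2 * s ^ 2)
      ≤ 16 * τ * (c ^ 2 * d ^ 2 + (a ^ 2 * b ^ 2 - ip ^ 2)) * (P * Q) := by
    rw [hcs2]
    calc 3 * c ^ 2 * (P + Q) ^ 2 * (τ ^ 2 - c ^ 4)
        = (τ ^ 2 - c ^ 4) * (3 * (c ^ 2 * (P + Q) ^ 2)) := by ring
      _ ≤ (τ ^ 2 - c ^ 4) * (8 * (P * Q) * (P * Q + c ^ 2 + ip)) :=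
          mul_le_mul_of_nonneg_left hT_tb (by linarith [pow_le_pow_left₀ (sq_nonneg c) hτc2 2, sq_abs τ, sq_nonneg τ, (by ring : ((c:ℝ) ^ 2) ^ 2 = c ^ 4), (by ring : (τ:ℝ) ^ 2 = τ ^ 2)])
      _ = 8 * (P * Q) * ((τ ^ 2 - c ^ 4) * (P * Q + c ^ 2 + ip)) := by ring
      _ = 8 * (P * Q) * ((τ + c ^ 2) * (c ^ 2 * d ^ 2 + (a ^ 2 * b ^ 2 - ip ^ 2))) := by rw [h15]
      _ ≤ 8 * (P * Q) * (2 * τ * (c ^ 2 * d ^ 2 + (a ^ 2 * b ^ 2 - ip ^ 2))) := by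
          refine mul_le_mul_of_nonneg_left ?_ (by positivity)
          exact mul_le_mul_of_nonneg_right (by linarith) hA0
      _ = 16 * τ * (c ^ 2 * d ^ 2 + (a ^ 2 * b ^ 2 - ip ^ 2)) * (P * Q) := by ring
  constructor
  · -- lower bound
    rw [div_le_div_iff₀ (by positivity) (by positivity)]
    have hs3 : 0 ≤ s ^ 3 := pow_nonneg hs0.le 3
    have hτ3 : 0 ≤ τ ^ 3 := pow_nonneg hτ0.le 3
    refine le_of_sq ?_ (by positivity) ?_
    · exact mul_nonneg hP0.le (mul_nonneg (mul_nonneg (sq_nonneg c) hs3) hPQ0.le)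
    have master : c ^ 4 * s ^ 6 * P ^ 4 * Q ^ 2 ≤ 15625 * c ^ 2 * τ ^ 4 * Jp ^ 6 * Jq ^ 18 := by
      have hKpos : (0:ℝ) < 1728 * c ^ 12 * (P + Q) ^ 6 * (P * Q) := by positivity
      refine le_of_mul_le_mul_left ?_ hKpos
      have h18 : (3 * c ^ 2 * (P + Q) ^ 2 * (c ^ 2 * s ^ 2)) ^ 3
          ≤ (16 * τ * (c ^ 2 * d ^ 2 + (a ^ 2 * b ^ 2 - ip ^ 2)) * (P * Q)) ^ 3 :=
        pow_le_pow_left₀ (by positivity) hs2ub 3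
      have h18' : 27 * c ^ 12 * (P + Q) ^ 6 * s ^ 6
          ≤ 4096 * τ ^ 3 * (c ^ 2 * d ^ 2 + (a ^ 2 * b ^ 2 - ip ^ 2)) ^ 3 * (P * Q) ^ 3 := by
        calc 27 * c ^ 12 * (P + Q) ^ 6 * s ^ 6
            = (3 * c ^ 2 * (P + Q) ^ 2 * (c ^ 2 * s ^ 2)) ^ 3 := by ring
          _ ≤ _ := h18
          _ = 4096 * τ ^ 3 * (c ^ 2 * d ^ 2 + (a ^ 2 * b ^ 2 - ip ^ 2)) ^ 3 * (P * Q) ^ 3 := by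
              ring
      -- last common step: from the big intermediate bound to K * RHS
      have hfinal : 3375000 * c ^ 16 * (P + Q) ^ 8 * τ ^ 3 * Jp ^ 6 * Jq ^ 18
          ≤ 1728 * c ^ 12 * (P + Q) ^ 6 * (P * Q) * (15625 * c ^ 2 * τ ^ 4 * Jp ^ 6 * Jq ^ 18) := by
        have hpre : (0:ℝ) ≤ 3375000 * c ^ 14 * (P + Q) ^ 6 * Jp ^ 6 * Jq ^ 18 * τ ^ 3 := by
          exact mul_nonneg (by positivity) hτ3
        calc 3375000 * c ^ 16 * (P + Q) ^ 8 * τ ^ 3 * Jp ^ 6 * Jq ^ 18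
            = (3375000 * c ^ 14 * (P + Q) ^ 6 * Jp ^ 6 * Jq ^ 18 * τ ^ 3) * (c ^ 2 * (P + Q) ^ 2) := by
              ring
          _ ≤ (3375000 * c ^ 14 * (P + Q) ^ 6 * Jp ^ 6 * Jq ^ 18 * τ ^ 3) * (8 * (P * Q) * τ) :=
              mul_le_mul_of_nonneg_left hT_tau hpre
          _ = 1728 * c ^ 12 * (P + Q) ^ 6 * (P * Q) * (15625 * c ^ 2 * τ ^ 4 * Jp ^ 6 * Jq ^ 18) := by
              ring
      rcases le_total b a with hba | hab'
      · -- case b ≤ a : use A ≤ d² Q² and Q ≤ P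
        have hQP : Q ≤ P := le_of_sq hQ0.le hP0.le
          (by linarith [hP2, hQ2, pow_le_pow_left₀ hb hba 2])
        have hdQ : d ^ 2 * Q ^ 2 = (a ^ 2 - 2 * ip + b ^ 2) * (c ^ 2 + b ^ 2) := by
          rw [hd2, hQ2]
        have hAubQ : c ^ 2 * d ^ 2 + (a ^ 2 * b ^ 2 - ip ^ 2) ≤ d ^ 2 * Q ^ 2 := by
          linarith [hdQ, hc2d2, sq_nonneg (ip - b ^ 2)]
        have hAcase : c ^ 2 * d ^ 2 + (a ^ 2 * b ^ 2 - ip ^ 2) ≤ Jp ^ 2 * Jq ^ 2 * Q ^ 2 := by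
          calc c ^ 2 * d ^ 2 + (a ^ 2 * b ^ 2 - ip ^ 2) ≤ d ^ 2 * Q ^ 2 := hAubQ
            _ ≤ Jp ^ 2 * Jq ^ 2 * Q ^ 2 := mul_le_mul_of_nonneg_right hd_le (sq_nonneg Q)
        have hA3 : (c ^ 2 * d ^ 2 + (a ^ 2 * b ^ 2 - ip ^ 2)) ^ 3 ≤ (Jp ^ 2 * Jq ^ 2 * Q ^ 2) ^ 3 :=
          pow_le_pow_left₀ hA0 hAcase 3
        have hQ12 : (Q ^ 2) ^ 6 ≤ (c ^ 2 * Jq ^ 2) ^ 6 := pow_le_pow_left₀ (sq_nonneg Q) hQ2c 6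
        calc 1728 * c ^ 12 * (P + Q) ^ 6 * (P * Q) * (c ^ 4 * s ^ 6 * P ^ 4 * Q ^ 2)
            = (64 * c ^ 4 * P ^ 5 * Q ^ 3) * (27 * c ^ 12 * (P + Q) ^ 6 * s ^ 6) := by ring
          _ ≤ (64 * c ^ 4 * P ^ 5 * Q ^ 3)
              * (4096 * τ ^ 3 * (c ^ 2 * d ^ 2 + (a ^ 2 * b ^ 2 - ip ^ 2)) ^ 3 * (P * Q) ^ 3) :=
              mul_le_mul_of_nonneg_left h18' (by positivity)
          _ = (262144 * c ^ 4 * P ^ 8 * Q ^ 6 * τ ^ 3)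
              * (c ^ 2 * d ^ 2 + (a ^ 2 * b ^ 2 - ip ^ 2)) ^ 3 := by ring
          _ ≤ (262144 * c ^ 4 * P ^ 8 * Q ^ 6 * τ ^ 3) * (Jp ^ 2 * Jq ^ 2 * Q ^ 2) ^ 3 := by
              refine mul_le_mul_of_nonneg_left hA3 ?_
              exact mul_nonneg (by positivity) hτ3
          _ = (262144 * c ^ 4 * P ^ 8 * Jp ^ 6 * Jq ^ 6 * τ ^ 3) * (Q ^ 2) ^ 6 := by ring
          _ ≤ (262144 * c ^ 4 * P ^ 8 * Jp ^ 6 * Jq ^ 6 * τ ^ 3) * (c ^ 2 * Jq ^ 2) ^ 6 := by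
              refine mul_le_mul_of_nonneg_left hQ12 ?_
              exact mul_nonneg (by positivity) hτ3
          _ = (262144 * Jp ^ 6 * Jq ^ 18 * c ^ 16 * τ ^ 3) * P ^ 8 := by ring
          _ ≤ (3375000 * Jp ^ 6 * Jq ^ 18 * c ^ 16 * τ ^ 3) * (P + Q) ^ 8 := by
              refine mul_le_mul ?_ (pow_le_pow_left₀ hP0.le (by linarith) 8) (by positivity) ?_
              · linarith [mul_nonneg (mul_nonneg (mul_nonneg hτ3 (by positivity : (0:ℝ) ≤ Jp ^ 6)) (by positivity : (0:ℝ) ≤ Jq ^ 18)) (by positivity : (0:ℝ) ≤ c ^ 16)]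
              · exact mul_nonneg (by positivity) hτ3
          _ = 3375000 * c ^ 16 * (P + Q) ^ 8 * τ ^ 3 * Jp ^ 6 * Jq ^ 18 := by ring
          _ ≤ _ := hfinal
      · -- case a ≤ b : use A ≤ d² P² and P ≤ Q
        have hPQ' : P ≤ Q := le_of_sq hP0.le hQ0.le
          (by linarith [hP2, hQ2, pow_le_pow_left₀ ha hab' 2])
        have hJpq : Jp ≤ Jq := le_of_sq hJp0.le hJq0.le
          (by linarith [hJp2, hJq2, pow_le_pow_left₀ ha hab' 2])
        have hdP : d ^ 2 * P ^ 2 = (a ^ 2 - 2 * ip + b ^ 2) * (c ^ 2 + a ^ 2) := by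
          rw [hd2, hP2]
        have hAubP : c ^ 2 * d ^ 2 + (a ^ 2 * b ^ 2 - ip ^ 2) ≤ d ^ 2 * P ^ 2 := by
          linarith [hdP, hc2d2, sq_nonneg (ip - a ^ 2)]
        have hAcase : c ^ 2 * d ^ 2 + (a ^ 2 * b ^ 2 - ip ^ 2) ≤ Jp ^ 2 * Jq ^ 2 * P ^ 2 := by
          calc c ^ 2 * d ^ 2 + (a ^ 2 * b ^ 2 - ip ^ 2) ≤ d ^ 2 * P ^ 2 := hAubP
            _ ≤ Jp ^ 2 * Jq ^ 2 * P ^ 2 := mul_le_mul_of_nonneg_right hd_le (sq_nonneg P)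
        have hA3 : (c ^ 2 * d ^ 2 + (a ^ 2 * b ^ 2 - ip ^ 2)) ^ 3 ≤ (Jp ^ 2 * Jq ^ 2 * P ^ 2) ^ 3 :=
          pow_le_pow_left₀ hA0 hAcase 3
        have hP12 : (P ^ 2) ^ 6 ≤ (c ^ 2 * Jq ^ 2) ^ 6 := by
          refine pow_le_pow_left₀ (sq_nonneg P) ?_ 6
          calc P ^ 2 ≤ c ^ 2 * Jp ^ 2 := hP2c
            _ ≤ c ^ 2 * Jq ^ 2 := by
                refine mul_le_mul_of_nonneg_left ?_ (sq_nonneg c)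
                exact pow_le_pow_left₀ hJp0.le hJpq 2
        have hQ8 : Q ^ 6 * P ^ 2 ≤ (P + Q) ^ 8 := by
          calc Q ^ 6 * P ^ 2 ≤ Q ^ 6 * Q ^ 2 := by
                refine mul_le_mul_of_nonneg_left (pow_le_pow_left₀ hP0.le hPQ' 2) (by positivity)
            _ = Q ^ 8 := by ring
            _ ≤ (P + Q) ^ 8 := pow_le_pow_left₀ hQ0.le (by linarith) 8
        calc 1728 * c ^ 12 * (P + Q) ^ 6 * (P * Q) * (c ^ 4 * s ^ 6 * P ^ 4 * Q ^ 2)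
            = (64 * c ^ 4 * P ^ 5 * Q ^ 3) * (27 * c ^ 12 * (P + Q) ^ 6 * s ^ 6) := by ring
          _ ≤ (64 * c ^ 4 * P ^ 5 * Q ^ 3)
              * (4096 * τ ^ 3 * (c ^ 2 * d ^ 2 + (a ^ 2 * b ^ 2 - ip ^ 2)) ^ 3 * (P * Q) ^ 3) :=
              mul_le_mul_of_nonneg_left h18' (by positivity)
          _ = (262144 * c ^ 4 * P ^ 8 * Q ^ 6 * τ ^ 3)
              * (c ^ 2 * d ^ 2 + (a ^ 2 * b ^ 2 - ip ^ 2)) ^ 3 := by ring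
          _ ≤ (262144 * c ^ 4 * P ^ 8 * Q ^ 6 * τ ^ 3) * (Jp ^ 2 * Jq ^ 2 * P ^ 2) ^ 3 := by
              refine mul_le_mul_of_nonneg_left hA3 ?_
              exact mul_nonneg (by positivity) hτ3
          _ = (262144 * c ^ 4 * P ^ 2 * Q ^ 6 * Jp ^ 6 * Jq ^ 6 * τ ^ 3) * (P ^ 2) ^ 6 := by ring
          _ ≤ (262144 * c ^ 4 * P ^ 2 * Q ^ 6 * Jp ^ 6 * Jq ^ 6 * τ ^ 3) * (c ^ 2 * Jq ^ 2) ^ 6 := by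
              refine mul_le_mul_of_nonneg_left hP12 ?_
              exact mul_nonneg (by positivity) hτ3
          _ = (262144 * Jp ^ 6 * Jq ^ 18 * c ^ 16 * τ ^ 3) * (Q ^ 6 * P ^ 2) := by ring
          _ ≤ (3375000 * Jp ^ 6 * Jq ^ 18 * c ^ 16 * τ ^ 3) * (P + Q) ^ 8 := by
              refine mul_le_mul ?_ hQ8 ?_ ?_
              · linarith [mul_nonneg (mul_nonneg (mul_nonneg hτ3 (by positivity : (0:ℝ) ≤ Jp ^ 6)) (by positivity : (0:ℝ) ≤ Jq ^ 18)) (by positivity : (0:ℝ) ≤ c ^ 16)]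
              · exact mul_nonneg (pow_nonneg hQ0.le 6) (sq_nonneg P)
              · exact mul_nonneg (by positivity) hτ3
          _ = 3375000 * c ^ 16 * (P + Q) ^ 8 * τ ^ 3 * Jp ^ 6 * Jq ^ 18 := by ring
          _ ≤ _ := hfinal
    calc (P * (c ^ 2 * s ^ 3 * (P * Q))) ^ 2 = c ^ 4 * s ^ 6 * P ^ 4 * Q ^ 2 := by ring
      _ ≤ 15625 * c ^ 2 * τ ^ 4 * Jp ^ 6 * Jq ^ 18 := master
      _ = (τ ^ 2 * (125 * c * Jp ^ 3 * Jq ^ 9)) ^ 2 := by ring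
  · -- upper bound
    have e1 : 32 / d ^ 3 * (Q / c * Jp ^ 4) = 32 * Q * Jp ^ 4 / (d ^ 3 * c) := by ring
    rw [e1, div_le_div_iff₀ (by positivity) (by positivity)]
    have hs3 : 0 ≤ s ^ 3 := pow_nonneg hs0.le 3
    refine le_of_sq (by positivity) ?_ ?_
    · exact mul_nonneg (by positivity) (mul_nonneg (mul_nonneg (sq_nonneg c) hs3) hPQ0.le)
    have h17 : (d ^ 2 * τ) ^ 3 ≤ (2 * (P * Q) * s ^ 2) ^ 3 :=
      pow_le_pow_left₀ (mul_nonneg (sq_nonneg d) hτ0.le) hs2lb 3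
    have h17' : d ^ 6 * τ ^ 3 ≤ 8 * (P * Q) ^ 3 * s ^ 6 := by
      calc d ^ 6 * τ ^ 3 = (d ^ 2 * τ) ^ 3 := by ring
        _ ≤ (2 * (P * Q) * s ^ 2) ^ 3 := h17
        _ = 8 * (P * Q) ^ 3 * s ^ 6 := by ring
    have hPfour : P ^ 2 ≤ 64 * c ^ 2 * Jp ^ 8 := by
      calc P ^ 2 ≤ c ^ 2 * Jp ^ 2 := hP2c
        _ ≤ c ^ 2 * Jp ^ 8 := by
            refine mul_le_mul_of_nonneg_left (pow_le_pow_right₀ hJp1 (by norm_num)) (sq_nonneg c)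
        _ ≤ 64 * c ^ 2 * Jp ^ 8 := by linarith [mul_nonneg (sq_nonneg c) (pow_nonneg hJp0.le 8)]
    have key : τ ^ 4 * d ^ 6 * c ^ 2 ≤ 1024 * c ^ 4 * s ^ 6 * P ^ 2 * Q ^ 4 * Jp ^ 8 := by
      calc τ ^ 4 * d ^ 6 * c ^ 2 = (c ^ 2 * τ) * (d ^ 6 * τ ^ 3) := by ring
        _ ≤ (c ^ 2 * τ) * (8 * (P * Q) ^ 3 * s ^ 6) := by
            refine mul_le_mul_of_nonneg_left h17' ?_
            exact mul_nonneg (sq_nonneg c) hτ0.le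
        _ ≤ (c ^ 2 * (2 * (P * Q))) * (8 * (P * Q) ^ 3 * s ^ 6) := by
            refine mul_le_mul_of_nonneg_right ?_ (by positivity)
            exact mul_le_mul_of_nonneg_left hτub (sq_nonneg c)
        _ = (16 * c ^ 2 * P ^ 2 * Q ^ 4 * s ^ 6) * P ^ 2 := by ring
        _ ≤ (16 * c ^ 2 * P ^ 2 * Q ^ 4 * s ^ 6) * (64 * c ^ 2 * Jp ^ 8) :=
            mul_le_mul_of_nonneg_left hPfour (by positivity)
        _ = 1024 * c ^ 4 * s ^ 6 * P ^ 2 * Q ^ 4 * Jp ^ 8 := by ring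
    calc (τ ^ 2 * (d ^ 3 * c)) ^ 2 = τ ^ 4 * d ^ 6 * c ^ 2 := by ring
      _ ≤ 1024 * c ^ 4 * s ^ 6 * P ^ 2 * Q ^ 4 * Jp ^ 8 := key
      _ = (32 * Q * Jp ^ 4 * (c ^ 2 * s ^ 3 * (P * Q))) ^ 2 := by ring


/-- Momentum space `ℝ³`. -/
abbrev E3 := EuclideanSpace ℝ (Fin 3)

/-- Relativistic energy `p⁰ = √(c² + |p|²)`. -/
def pZ (c : ℝ) (p : E3) : ℝ := Real.sqrt (c ^ 2 + ‖p‖ ^ 2)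

/-- Japanese bracket `⟨p⟩ = √(1 + |p|²)`. -/
def jb (p : E3) : ℝ := Real.sqrt (1 + ‖p‖ ^ 2)

/-- Euclidean inner product on `ℝ³`. -/
def dotp (p q : E3) : ℝ := inner ℝ p q

/-- `Λ^c(p,q) = ((p⁰q⁰ − p·q)²/c⁴)·[((p⁰q⁰ − p·q)² − c⁴)/c²]^{−3/2}`. -/
def Lam (c : ℝ) (p q : E3) : ℝ :=
  (pZ c p * pZ c q - dotp p q) ^ 2 / c ^ 4 *
    (((pZ c p * pZ c q - dotp p q) ^ 2 - c ^ 4) / c ^ 2) ^ (-(3 : ℝ) / 2)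

/-- The matrix `S^c(p,q)` with entries
`S^{c,ij}(p,q) = [((p⁰q⁰ − p·q)² − c⁴)/c²]·δ_{ij} − (p−q)_i(p−q)_j
 + [(p⁰q⁰ − p·q − c²)/c²]·(p_i q_j + q_i p_j)`. -/
def Smat (c : ℝ) (p q : E3) (i j : Fin 3) : ℝ :=
  ((pZ c p * pZ c q - dotp p q) ^ 2 - c ^ 4) / c ^ 2 * (if i = j then 1 else 0)
    - (p i - q i) * (p j - q j)
    + (pZ c p * pZ c q - dotp p q - c ^ 2) / c ^ 2 * (p i * q j + q i * p j)

/-- The relativistic Landau collision kernel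
`Φ^{c,ij}(p,q) = (c/p⁰)(c/q⁰)·Λ^c(p,q)·S^{c,ij}(p,q)`. -/
def Phi (c : ℝ) (p q : E3) (i j : Fin 3) : ℝ :=
  c / pZ c p * (c / pZ c q) * Lam c p q * Smat c p q i j

/-- For every `c ≥ 1` and all `p ≠ q`, the function `Λ^c` satisfies the two-sided bound
`(1/125)·⟨p⟩⁻³⟨q⟩⁻³·max{p⁰/(c⟨q⟩⁶), q⁰/(c⟨p⟩⁶)} ≤ c²Λ^c(p,q)/(p⁰q⁰)
  ≤ 32·|p−q|⁻³·min{(q⁰/c)⟨p⟩⁴, (p⁰/c)⟨q⟩⁴}`. -/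
theorem stmt13 (c : ℝ) (hc : 1 ≤ c) (p q : E3) (hpq : p ≠ q) :
    1 / 125 * (jb p ^ 3)⁻¹ * (jb q ^ 3)⁻¹ *
        max (pZ c p / (c * jb q ^ 6)) (pZ c q / (c * jb p ^ 6))
      ≤ c ^ 2 * Lam c p q / (pZ c p * pZ c q) ∧
    c ^ 2 * Lam c p q / (pZ c p * pZ c q)
      ≤ 32 * (‖p - q‖ ^ 3)⁻¹ * min (pZ c q / c * jb p ^ 4) (pZ c p / c * jb q ^ 4) := by
  have hc0 : (0:ℝ) < c := lt_of_lt_of_le one_pos hc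
  have ha : (0:ℝ) ≤ ‖p‖ := norm_nonneg p
  have hb : (0:ℝ) ≤ ‖q‖ := norm_nonneg q
  have hd0 : 0 < ‖p - q‖ := by rw [norm_pos_iff]; exact sub_ne_zero.mpr hpq
  have hP2 : (pZ c p) ^ 2 = c ^ 2 + ‖p‖ ^ 2 := Real.sq_sqrt (by positivity)
  have hQ2 : (pZ c q) ^ 2 = c ^ 2 + ‖q‖ ^ 2 := Real.sq_sqrt (by positivity)
  have hJp2 : (jb p) ^ 2 = 1 + ‖p‖ ^ 2 := Real.sq_sqrt (by positivity)
  have hJq2 : (jb q) ^ 2 = 1 + ‖q‖ ^ 2 := Real.sq_sqrt (by positivity)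
  have hP0 : 0 < pZ c p := Real.sqrt_pos.mpr (by positivity)
  have hQ0 : 0 < pZ c q := Real.sqrt_pos.mpr (by positivity)
  have hJp0 : 0 < jb p := Real.sqrt_pos.mpr (by positivity)
  have hJq0 : 0 < jb q := Real.sqrt_pos.mpr (by positivity)
  have hip : |dotp p q| ≤ ‖p‖ * ‖q‖ := abs_real_inner_le_norm p q
  have hip1 : dotp p q ≤ ‖p‖ * ‖q‖ := (abs_le.mp hip).2
  have hip2 : -(‖p‖ * ‖q‖) ≤ dotp p q := (abs_le.mp hip).1
  have hd2 : ‖p - q‖ ^ 2 = ‖p‖ ^ 2 - 2 * dotp p q + ‖q‖ ^ 2 := norm_sub_sq_real p q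
  have hPQ2 : (pZ c p * pZ c q) ^ 2 = (c ^ 2 + ‖p‖ ^ 2) * (c ^ 2 + ‖q‖ ^ 2) := by
    rw [mul_pow, hP2, hQ2]
  have hPQ0 : 0 < pZ c p * pZ c q := mul_pos hP0 hQ0
  have hPQab : c ^ 2 + ‖p‖ * ‖q‖ ≤ pZ c p * pZ c q := by
    refine le_of_sq (by positivity) hPQ0.le ?_
    linarith [hPQ2, mul_nonneg (sq_nonneg c) (sq_nonneg (‖p‖ - ‖q‖))]
  have h_iden : (pZ c p * pZ c q - dotp p q - c ^ 2) * (pZ c p * pZ c q + c ^ 2 + dotp p q)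
      = c ^ 2 * ‖p - q‖ ^ 2 + (‖p‖ ^ 2 * ‖q‖ ^ 2 - (dotp p q) ^ 2) := by
    linear_combination hPQ2 - c ^ 2 * hd2
  have hip3 : 0 ≤ ‖p‖ ^ 2 * ‖q‖ ^ 2 - (dotp p q) ^ 2 := by
    linarith [mul_nonneg (by linarith : (0:ℝ) ≤ ‖p‖ * ‖q‖ - dotp p q)
      (by linarith : (0:ℝ) ≤ ‖p‖ * ‖q‖ + dotp p q)]
  have hA0 : 0 < c ^ 2 * ‖p - q‖ ^ 2 + (‖p‖ ^ 2 * ‖q‖ ^ 2 - (dotp p q) ^ 2) := by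
    have : 0 < c ^ 2 * ‖p - q‖ ^ 2 := by positivity
    linarith
  have htb0 : 0 < pZ c p * pZ c q + c ^ 2 + dotp p q := by
    have := pow_pos hc0 2; linarith
  have hτgt : c ^ 2 < pZ c p * pZ c q - dotp p q := by
    nlinarith [h_iden, hA0, htb0]
  have hτ2 : c ^ 4 < (pZ c p * pZ c q - dotp p q) ^ 2 := by
    nlinarith [hτgt, sq_nonneg c]
  have hy0 : 0 < ((pZ c p * pZ c q - dotp p q) ^ 2 - c ^ 4) / c ^ 2 := by
    apply div_pos (by linarith) (by positivity)
  set s : ℝ := Real.sqrt (((pZ c p * pZ c q - dotp p q) ^ 2 - c ^ 4) / c ^ 2) with hsdef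
  have hs0 : 0 < s := Real.sqrt_pos.mpr hy0
  have hs2 : s ^ 2 = ((pZ c p * pZ c q - dotp p q) ^ 2 - c ^ 4) / c ^ 2 := Real.sq_sqrt hy0.le
  have hcs2 : c ^ 2 * s ^ 2 = (pZ c p * pZ c q - dotp p q) ^ 2 - c ^ 4 := by
    rw [hs2]; field_simp
  have hrpow : (((pZ c p * pZ c q - dotp p q) ^ 2 - c ^ 4) / c ^ 2) ^ (-(3 : ℝ) / 2)
      = (s ^ 3)⁻¹ := by
    rw [hsdef]
    rw [show (-(3:ℝ) / 2) = -(3 / 2) by norm_num, Real.rpow_neg hy0.le]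
    congr 1
    rw [show ((3:ℝ) / 2) = (1 / 2) * 3 by norm_num, Real.rpow_mul hy0.le,
      ← Real.sqrt_eq_rpow, show ((3:ℝ)) = ((3:ℕ):ℝ) by norm_num, Real.rpow_natCast]
  have hexpr : c ^ 2 * Lam c p q / (pZ c p * pZ c q)
      = (pZ c p * pZ c q - dotp p q) ^ 2 / (c ^ 2 * s ^ 3 * (pZ c p * pZ c q)) := by
    rw [Lam, hrpow]
    field_simp
  have K1 := key_core c ‖p‖ ‖q‖ ‖p - q‖ (dotp p q) (pZ c p) (pZ c q) (jb p) (jb q)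
    (pZ c p * pZ c q - dotp p q) s hc ha hb hd0 hP2 hQ2 hJp2 hJq2 hd2 hip1 hip2
    hP0 hQ0 hJp0 hJq0 rfl hs0 hcs2
  have K2 := key_core c ‖q‖ ‖p‖ ‖p - q‖ (dotp p q) (pZ c q) (pZ c p) (jb q) (jb p)
    (pZ c p * pZ c q - dotp p q) s hc hb ha hd0 hQ2 hP2 hJq2 hJp2 (by linarith [hd2])
    (by rw [mul_comm]; exact hip1) (by rw [mul_comm]; exact hip2)
    hQ0 hP0 hJq0 hJp0 (by ring) hs0 hcs2
  rw [mul_comm (pZ c q) (pZ c p)] at K2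
  constructor
  · rw [hexpr]
    rcases max_cases (pZ c p / (c * jb q ^ 6)) (pZ c q / (c * jb p ^ 6)) with ⟨hm, _⟩ | ⟨hm, _⟩ <;>
      rw [hm]
    · have e1 : 1 / 125 * (jb p ^ 3)⁻¹ * (jb q ^ 3)⁻¹ * (pZ c p / (c * jb q ^ 6))
          = pZ c p / (125 * c * jb p ^ 3 * jb q ^ 9) := by
        rw [eq_div_iff (by positivity)]
        field_simp
      rw [e1]; exact K1.1
    · have e2 : 1 / 125 * (jb p ^ 3)⁻¹ * (jb q ^ 3)⁻¹ * (pZ c q / (c * jb p ^ 6))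
          = pZ c q / (125 * c * jb q ^ 3 * jb p ^ 9) := by
        rw [eq_div_iff (by positivity)]
        field_simp
      rw [e2]; exact K2.1
  · rw [hexpr]
    rcases min_cases (pZ c q / c * jb p ^ 4) (pZ c p / c * jb q ^ 4) with ⟨hm, _⟩ | ⟨hm, _⟩ <;>
      rw [hm]
    · have e3 : 32 * (‖p - q‖ ^ 3)⁻¹ * (pZ c q / c * jb p ^ 4)
          = 32 / ‖p - q‖ ^ 3 * (pZ c q / c * jb p ^ 4) := by ring
      rw [e3]; exact K1.2
    · have e4 : 32 * (‖p - q‖ ^ 3)⁻¹ * (pZ c p / c * jb q ^ 4)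
          = 32 / ‖p - q‖ ^ 3 * (pZ c p / c * jb q ^ 4) := by ring
      rw [e4]; exact K2.2

end
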